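/- Let π be a permutation of {1,...,n} with exactly two distinct fixed points j and j' with 2 ≤ j, j' ≤ n−1, obtained from some permutation π'' of length n−2 by inserting both fixed points. If π'' has k associated complete non-ambiguous trees, then π has at least 4k associated complete non-ambiguous trees. More abstractly as proved via the ASM correspondence: if G is the permutation graph of a permutation with two fixed points inserted, its number of minimal recurrent configurations is at least 4 times that of the original permutation's graph. -/

import Mathlib

/-- An acyclic orientation of a simple graph: each edge gets exactly one direction,
and there are no directed cycles. -/
structure AcyclicOrientation {V : Type*} (G : SimpleGraph V) where
  dir : V → V → Prop
  adj_of_dir : ∀ a b, dir a b → G.Adj a b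
  total : ∀ a b, G.Adj a b → dir a b ∨ dir b a
  asymm : ∀ a b, dir a b → ¬ dir b a
  acyclic : ∀ v, ¬ Relation.TransGen dir v v

/-- `s` is a target: all incident edges are directed towards `s`. -/
def AcyclicOrientation.IsTarget {V : Type*} {G : SimpleGraph V}
    (o : AcyclicOrientation G) (s : V) : Prop :=
  ∀ a, G.Adj a s → o.dir a s

/-- `s` is a source: all incident edges are directed away from `s`. -/
def AcyclicOrientation.IsSource {V : Type*} {G : SimpleGraph V}
    (o : AcyclicOrientation G) (s : V) : Prop :=
  ∀ a, G.Adj s a → o.dir s a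

/-- An `s`-rooted acyclic orientation: `s` is the unique target. -/
def AcyclicOrientation.IsRooted {V : Type*} {G : SimpleGraph V}
    (o : AcyclicOrientation G) (s : V) : Prop :=
  o.IsTarget s ∧ ∀ t, o.IsTarget t → t = s

/-- The number of `s`-rooted acyclic orientations of `G`. -/
noncomputable def rootedCount {V : Type*} (G : SimpleGraph V) (s : V) : ℕ :=
  Nat.card {o : AcyclicOrientation G // o.IsRooted s}

/-- The permutation graph of `π`: vertices are the values, and two values are adjacent
when they form an inversion (the larger value appears before the smaller one,
i.e. at an earlier position). -/
def permGraph (n : ℕ) (π : Equiv.Perm (Fin n)) : SimpleGraph (Fin n) where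
  Adj a b := (b < a ∧ π.symm a < π.symm b) ∨ (a < b ∧ π.symm b < π.symm a)
  symm := ⟨fun a b h => Or.symm h⟩
  loopless := ⟨fun a h => by rcases h with ⟨h, -⟩ | ⟨h, -⟩ <;> exact lt_irrefl _ h⟩

/-- Insert a fixed point at (0-based) position/value `j`, shifting all
positions and values `≥ j` up by one. -/
def insertFix {n : ℕ} (j : Fin (n + 1)) (π : Equiv.Perm (Fin n)) : Equiv.Perm (Fin (n + 1)) :=
  ((finSuccEquiv' j).trans (Equiv.optionCongr π)).trans (finSuccEquiv' j).symm

/-!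
The number of rooted acyclic orientations does not depend on the root: reversing every edge
reachable from `s'` turns an `s`-rooted orientation into an `s'`-rooted one, and reversing
again at `s` undoes it.

An inserted fixed point `c` of a permutation graph has at least two neighbours. If the smaller
graph has a rooted orientation at all, it is connected, so some inversion straddles `c`, and
that gives a neighbour of `c`. A second one exists because the permutation moves as many values
from the left of `c` to its right as it moves the other way.

Deleting a vertex `v` with two neighbours at least halves the count: a rooted orientation of
`G - v` extends to `G` with `v` as a source, and also with a single edge entering `v` from a
neighbour that no other neighbour of `v` reaches. Inserting two fixed points thus gives the
factor `4`.
-/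

open Relation

namespace AcyclicOrientation

variable {V : Type*} {G : SimpleGraph V}

@[ext]
theorem ext {o o' : AcyclicOrientation G} (h : ∀ a b, o.dir a b ↔ o'.dir a b) : o = o' := by
  cases o; cases o'
  congr
  ext a b
  exact h a b

instance [Finite V] : Finite (AcyclicOrientation G) :=
  Finite.of_injective dir fun _ _ h => ext fun a b => by rw [h]

theorem not_transGen_of_reflTransGen (o : AcyclicOrientation G) {a b : V}
    (hab : TransGen o.dir a b) (hba : ReflTransGen o.dir b a) : False :=
  o.acyclic a (hab.trans_left hba)

theorem exists_isTarget_reflTransGen [Finite V] (o : AcyclicOrientation G) (v : V) :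
    ∃ t, o.IsTarget t ∧ ReflTransGen o.dir v t := by
  have : IsTrans V (flip (TransGen o.dir)) := ⟨fun _ _ _ hab hbc => hbc.trans hab⟩
  have : Std.Irrefl (flip (TransGen o.dir)) := ⟨o.acyclic⟩
  obtain ⟨t, hvt, hmax⟩ :=
    (Finite.wellFounded_of_trans_of_irrefl (flip (TransGen o.dir))).has_min
      {x | ReflTransGen o.dir v x} ⟨v, .refl⟩
  refine ⟨t, fun a hat => ?_, hvt⟩
  rcases o.total a t hat with h | h
  · exact h
  · exact absurd (.single h) (hmax a (hvt.tail h))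

theorem isRooted_iff [Finite V] (o : AcyclicOrientation G) (s : V) :
    o.IsRooted s ↔ ∀ v, ReflTransGen o.dir v s := by
  constructor
  · rintro ⟨-, huniq⟩ v
    obtain ⟨t, ht, hvt⟩ := o.exists_isTarget_reflTransGen v
    exact huniq t ht ▸ hvt
  · intro h
    refine ⟨fun a has => ?_, fun t ht => ?_⟩
    · exact (o.total a s has).resolve_right fun hsa =>
        o.not_transGen_of_reflTransGen (.single hsa) (h a)
    · rcases (h t).cases_head with rfl | ⟨c, htc, -⟩
      · rfl
      · exact absurd htc (o.asymm _ _ (ht c (o.adj_of_dir _ _ htc).symm))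

theorem IsRooted.preconnected [Finite V] {o : AcyclicOrientation G} {s : V}
    (ho : o.IsRooted s) : G.Preconnected := by
  have hreach (v : V) : G.Reachable v s :=
    (SimpleGraph.reachable_iff_reflTransGen _ _).mpr
      (ReflTransGen.mono o.adj_of_dir _ _ ((o.isRooted_iff s).mp ho v))
  exact fun a b => (hreach a).trans (hreach b).symm

section ReverseOn

variable {o : AcyclicOrientation G} {D : Set V}

def reverseOnDir (o : AcyclicOrientation G) (D : Set V) (a b : V) : Prop :=
  (a ∈ D ∧ b ∈ D ∧ o.dir b a) ∨ (¬(a ∈ D ∧ b ∈ D) ∧ o.dir a b)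

variable (hD : ∀ a ∈ D, ∀ b, o.dir a b → b ∈ D)
include hD

theorem reflTransGen_reverseOnDir_of_mem {x y : V} (h : ReflTransGen (reverseOnDir o D) x y)
    (hx : x ∈ D) : y ∈ D ∧ ReflTransGen o.dir y x := by
  induction h with
  | refl => exact ⟨hx, .refl⟩
  | tail _ hstep ih =>
    obtain ⟨hbD, hyb⟩ := ih
    rcases hstep with ⟨-, hyD, hdir⟩ | ⟨hnot, hdir⟩
    · exact ⟨hyD, .head hdir hyb⟩
    · exact absurd ⟨hbD, hD _ hbD _ hdir⟩ hnot

theorem reflTransGen_reverseOnDir_of_notMem {x y : V} (h : ReflTransGen (reverseOnDir o D) x y)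
    (hy : y ∉ D) : ReflTransGen o.dir x y := by
  induction h with
  | refl => exact .refl
  | tail _ hstep ih =>
    rcases hstep with ⟨-, hyD, -⟩ | ⟨-, hdir⟩
    · exact absurd hyD hy
    · exact (ih fun hbD => hy (hD _ hbD _ hdir)).tail hdir

theorem reflTransGen_reverseOnDir_of_reflTransGen {a b : V} (h : ReflTransGen o.dir a b)
    (ha : a ∈ D) : b ∈ D ∧ ReflTransGen (reverseOnDir o D) b a := by
  induction h with
  | refl => exact ⟨ha, .refl⟩
  | tail _ hstep ih =>
    obtain ⟨hcD, hpath⟩ := ih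
    have hbD := hD _ hcD _ hstep
    exact ⟨hbD, .head (Or.inl ⟨hbD, hcD, hstep⟩) hpath⟩

def reverseOn : AcyclicOrientation G where
  dir := reverseOnDir o D
  adj_of_dir := by
    rintro a b (⟨-, -, h⟩ | ⟨-, h⟩)
    · exact (o.adj_of_dir _ _ h).symm
    · exact o.adj_of_dir _ _ h
  total a b hab := by
    by_cases hmem : a ∈ D ∧ b ∈ D
    · exact (o.total a b hab).symm.imp (fun h => .inl ⟨hmem.1, hmem.2, h⟩)
        (fun h => .inl ⟨hmem.2, hmem.1, h⟩)
    · exact (o.total a b hab).imp (fun h => .inr ⟨hmem, h⟩)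
        (fun h => .inr ⟨fun hm => hmem ⟨hm.2, hm.1⟩, h⟩)
  asymm := by
    rintro a b (⟨ha, hb, h⟩ | ⟨hnot, h⟩) (⟨hb', ha', h'⟩ | ⟨hnot', h'⟩)
    · exact o.asymm _ _ h h'
    · exact hnot' ⟨hb, ha⟩
    · exact hnot ⟨ha', hb'⟩
    · exact o.asymm _ _ h h'
  acyclic x hcyc := by
    obtain ⟨b, hstep, hbx⟩ := TransGen.head'_iff.mp hcyc
    by_cases hx : x ∈ D
    · rcases hstep with ⟨-, hbD, hdir⟩ | ⟨hnot, hdir⟩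
      · exact o.not_transGen_of_reflTransGen (.single hdir)
          (reflTransGen_reverseOnDir_of_mem hD hbx hbD).2
      · exact hnot ⟨hx, hD _ hx _ hdir⟩
    · rcases hstep with ⟨hxD, -, -⟩ | ⟨-, hdir⟩
      · exact hx hxD
      · exact o.not_transGen_of_reflTransGen (.single hdir)
          (reflTransGen_reverseOnDir_of_notMem hD hbx hx)

theorem reverseOnDir_reverseOn : reverseOnDir (reverseOn hD) D = o.dir := by
  ext a b
  simp only [reverseOnDir, reverseOn]
  tauto

end ReverseOn

section Reroot

theorem setOf_reflTransGen_closed (o : AcyclicOrientation G) (s : V) :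
    ∀ a ∈ {x | ReflTransGen o.dir s x}, ∀ b, o.dir a b →
      b ∈ {x | ReflTransGen o.dir s x} :=
  fun _ ha _ hab => ReflTransGen.tail ha hab

def reroot (s' : V) (o : AcyclicOrientation G) : AcyclicOrientation G :=
  reverseOn (setOf_reflTransGen_closed o s')

variable [Finite V]

theorem reroot_isRooted {o : AcyclicOrientation G} {s : V} (ho : o.IsRooted s) (s' : V) :
    (o.reroot s').IsRooted s' := by
  have hD := setOf_reflTransGen_closed o s'
  have hs := (o.isRooted_iff s).mp ho
  rw [isRooted_iff]
  intro z
  induction hs z using ReflTransGen.head_induction_on with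
  | refl => exact (reflTransGen_reverseOnDir_of_reflTransGen hD (hs s') .refl).2
  | @head a _ hac _ ih =>
    by_cases haD : ReflTransGen o.dir s' a
    · exact (reflTransGen_reverseOnDir_of_reflTransGen hD haD .refl).2
    · exact .head (Or.inr ⟨fun hm => haD hm.1, hac⟩) ih

theorem reflTransGen_reroot_iff {o : AcyclicOrientation G} {s : V} (ho : o.IsRooted s)
    (s' z : V) :
    ReflTransGen (o.reroot s').dir s z ↔ ReflTransGen o.dir s' z := by
  have hD := setOf_reflTransGen_closed o s'
  have hs := (o.isRooted_iff s).mp ho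
  exact ⟨fun h => (reflTransGen_reverseOnDir_of_mem hD h (hs s')).1,
    fun h => (reflTransGen_reverseOnDir_of_reflTransGen hD (hs z) h).2⟩

theorem reroot_reroot {o : AcyclicOrientation G} {s : V} (ho : o.IsRooted s) (s' : V) :
    (o.reroot s').reroot s = o := by
  ext a b
  change reverseOnDir (o.reroot s') {x | ReflTransGen (o.reroot s').dir s x} a b ↔ _
  simp only [reflTransGen_reroot_iff ho]
  rw [reroot, reverseOnDir_reverseOn]

def rerootEquiv (s s' : V) :
    {o : AcyclicOrientation G // o.IsRooted s} ≃ {o : AcyclicOrientation G // o.IsRooted s'} where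
  toFun o := ⟨o.1.reroot s', reroot_isRooted o.2 s'⟩
  invFun o := ⟨o.1.reroot s, reroot_isRooted o.2 s⟩
  left_inv o := Subtype.ext (reroot_reroot o.2 s')
  right_inv o := Subtype.ext (reroot_reroot o.2 s)

end Reroot

section Map

variable {W : Type*} {H : SimpleGraph W}

def map (e : G ≃g H) (o : AcyclicOrientation G) : AcyclicOrientation H where
  dir a b := o.dir (e.symm a) (e.symm b)
  adj_of_dir _ _ h := e.symm.map_adj_iff.mp (o.adj_of_dir _ _ h)
  total _ _ hab := o.total _ _ (e.symm.map_adj_iff.mpr hab)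
  asymm _ _ := o.asymm _ _
  acyclic x hx := o.acyclic (e.symm x) (TransGen.lift e.symm (fun _ _ h => h) _ _ hx)

theorem map_symm_map (e : G ≃g H) (o : AcyclicOrientation G) : (o.map e).map e.symm = o := by
  ext a b
  simp [map]

theorem isTarget_map (e : G ≃g H) (o : AcyclicOrientation G) (s : V) :
    (o.map e).IsTarget (e s) ↔ o.IsTarget s := by
  simp only [IsTarget, map, e.symm_apply_apply]
  refine ⟨fun h a has => ?_, fun h a has => h _ ?_⟩
  · simpa using h (e a) (e.map_adj_iff.mpr has)
  · simpa using e.symm.map_adj_iff.mpr has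

theorem isRooted_map (e : G ≃g H) (o : AcyclicOrientation G) (s : V) :
    (o.map e).IsRooted (e s) ↔ o.IsRooted s := by
  rw [IsRooted, IsRooted, ← e.toEquiv.forall_congr_right]
  simp [isTarget_map]

end Map

section Extend

variable {v : V} (o : AcyclicOrientation (G.induce {v}ᶜ)) (I : Set V)

def extendDir (a b : V) : Prop :=
  (∃ (ha : a ≠ v) (hb : b ≠ v), o.dir ⟨a, ha⟩ ⟨b, hb⟩) ∨
    (a = v ∧ G.Adj v b ∧ b ∉ I) ∨ (b = v ∧ G.Adj a v ∧ a ∈ I)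

variable {o I}

theorem extendDir_coe {a b : ({v}ᶜ : Set V)} : extendDir o I a b ↔ o.dir a b := by
  refine ⟨?_, fun h => .inl ⟨a.2, b.2, h⟩⟩
  rintro (⟨_, _, h⟩ | ⟨hav, -⟩ | ⟨hbv, -⟩)
  · exact h
  · exact absurd hav a.2
  · exact absurd hbv b.2

theorem extendDir_to_self {a : V} : extendDir o I a v ↔ G.Adj a v ∧ a ∈ I := by
  refine ⟨?_, fun h => .inr (.inr ⟨rfl, h⟩)⟩
  rintro (⟨-, hv, -⟩ | ⟨rfl, hvv, -⟩ | ⟨-, h⟩)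
  · exact absurd rfl hv
  · exact absurd hvv (G.loopless.irrefl _)
  · exact h

theorem reflTransGen_extendDir_coe {a b : ({v}ᶜ : Set V)} (h : ReflTransGen o.dir a b) :
    ReflTransGen (extendDir o I) a b :=
  ReflTransGen.lift Subtype.val (fun _ _ => extendDir_coe.mpr) _ _ h

theorem reflTransGen_extendDir {x y : V} (h : ReflTransGen (extendDir o I) x y) :
    (∃ (hx : x ≠ v) (hy : y ≠ v), ReflTransGen o.dir ⟨x, hx⟩ ⟨y, hy⟩) ∨
      (ReflTransGen (extendDir o I) x v ∧ ReflTransGen (extendDir o I) v y) := by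
  induction h with
  | refl =>
    by_cases hx : x = v
    · subst hx
      exact .inr ⟨.refl, .refl⟩
    · exact .inl ⟨hx, hx, .refl⟩
  | @tail b y hxb hby ih =>
    rcases ih with ⟨hx, hb, hpath⟩ | ⟨hxv, hvb⟩
    · rcases hby with ⟨_, hy, hdir⟩ | ⟨hbv, -⟩ | hbv
      · exact .inl ⟨hx, hy, hpath.tail hdir⟩
      · exact absurd hbv hb
      · obtain rfl := hbv.1
        exact .inr ⟨hxb.tail (.inr (.inr hbv)), .refl⟩
    · exact .inr ⟨hxv, hvb.tail hby⟩

theorem reflTransGen_extendDir_of_ne {x y : V} (hx : x ≠ v)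
    (h : ReflTransGen (extendDir o I) x y) :
    (∃ (u : V) (hu : u ≠ v), u ∈ I ∧ ReflTransGen o.dir ⟨x, hx⟩ ⟨u, hu⟩) ∨
      ∃ hy : y ≠ v, ReflTransGen o.dir ⟨x, hx⟩ ⟨y, hy⟩ := by
  induction h with
  | refl => exact .inr ⟨hx, .refl⟩
  | @tail b y _ hby ih =>
    rcases ih with hI | ⟨hb, hpath⟩
    · exact .inl hI
    · rcases hby with ⟨_, hy, hdir⟩ | ⟨hbv, -⟩ | ⟨-, -, hbI⟩
      · exact .inr ⟨hy, hpath.tail hdir⟩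
      · exact absurd hbv hb
      · exact .inl ⟨b, hb, hbI, hpath⟩

variable (o I) in
def extend (hI : ∀ w u : ({v}ᶜ : Set V), G.Adj v w → (w : V) ∉ I → (u : V) ∈ I →
      ¬ ReflTransGen o.dir w u) :
    AcyclicOrientation G where
  dir := extendDir o I
  adj_of_dir := by
    rintro a b (⟨_, _, h⟩ | ⟨rfl, h, -⟩ | ⟨rfl, h, -⟩)
    exacts [o.adj_of_dir _ _ h, h, h]
  total a b hab := by
    by_cases ha : a = v
    · subst ha
      by_cases hb : b ∈ I
      · exact .inr (.inr (.inr ⟨rfl, hab.symm, hb⟩))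
      · exact .inl (.inr (.inl ⟨rfl, hab, hb⟩))
    by_cases hb : b = v
    · subst hb
      by_cases ha' : a ∈ I
      · exact .inl (.inr (.inr ⟨rfl, hab, ha'⟩))
      · exact .inr (.inr (.inl ⟨rfl, hab.symm, ha'⟩))
    exact (o.total ⟨a, ha⟩ ⟨b, hb⟩ hab).imp (fun h => .inl ⟨ha, hb, h⟩)
      (fun h => .inl ⟨hb, ha, h⟩)
  asymm := by
    rintro a b (⟨ha, hb, h⟩ | ⟨hav, hab, hbI⟩ | ⟨hbv, hab, haI⟩)
      (⟨hb', ha', h'⟩ | ⟨hbv', -, haI'⟩ | ⟨hav', -, hbI'⟩)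
    · exact o.asymm _ _ h h'
    · exact hb hbv'
    · exact ha hav'
    · exact ha' hav
    · exact G.loopless.irrefl v (hbv' ▸ hab)
    · exact hbI hbI'
    · exact hb' hbv
    · exact haI' haI
    · exact G.loopless.irrefl v (hav' ▸ hab)
  acyclic := by
    have hv : ¬ TransGen (extendDir o I) v v := by
      intro hcyc
      obtain ⟨w, hvw, hwv⟩ := TransGen.head'_iff.mp hcyc
      rcases hvw with ⟨hne, -⟩ | ⟨-, hadj, hwI⟩ | ⟨rfl, hvv, -⟩
      · exact hne rfl
      · rcases reflTransGen_extendDir_of_ne hadj.ne.symm hwv with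
          ⟨u, hu, huI, hwu⟩ | ⟨hvv, -⟩
        · exact hI ⟨w, hadj.ne.symm⟩ ⟨u, hu⟩ hadj hwI huI hwu
        · exact hvv rfl
      · exact G.loopless.irrefl _ hvv
    intro z hcyc
    obtain ⟨b, hzb, hbz⟩ := TransGen.head'_iff.mp hcyc
    rcases reflTransGen_extendDir hbz with ⟨hb, hz, hpath⟩ | ⟨hbv, hvz⟩
    · rcases hzb with ⟨_, _, hdir⟩ | ⟨hzv, -⟩ | ⟨hbv, -⟩
      · exact o.not_transGen_of_reflTransGen (.single hdir) hpath
      · exact hz hzv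
      · exact hb hbv
    · exact hv (TransGen.trans_right hvz (.head' hzb hbv))

theorem eq_of_extendDir_eq {o o' : AcyclicOrientation (G.induce {v}ᶜ)} {I I' : Set V}
    (h : extendDir o I = extendDir o' I') : o = o' := by
  ext a b
  rw [← extendDir_coe (I := I), ← extendDir_coe (I := I'), h]

theorem isRooted_extend [Finite V] {hI} {t : V} (ht : t ≠ v) (ho : o.IsRooted ⟨t, ht⟩)
    (hw : ∃ w ∈ G.neighborSet v, w ∉ I) : (o.extend I hI).IsRooted t := by
  rw [isRooted_iff]
  have hreach (z : ({v}ᶜ : Set V)) : ReflTransGen (extendDir o I) z t :=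
    reflTransGen_extendDir_coe ((o.isRooted_iff _).mp ho z)
  intro z
  by_cases hz : z = v
  · subst hz
    obtain ⟨w, hvw, hwI⟩ := hw
    exact .head (.inr (.inl ⟨rfl, hvw, hwI⟩)) (hreach ⟨w, hvw.ne.symm⟩)
  · exact hreach ⟨z, hz⟩

theorem exists_adj_forall_not_reflTransGen [Finite V] (o : AcyclicOrientation (G.induce {v}ᶜ))
    {w₀ : V} (hw₀ : G.Adj v w₀) :
    ∃ u : ({v}ᶜ : Set V), G.Adj v u ∧
      ∀ w : ({v}ᶜ : Set V), G.Adj v w → w ≠ u → ¬ ReflTransGen o.dir w u := by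
  have : IsTrans _ (TransGen o.dir) := ⟨fun _ _ _ => TransGen.trans⟩
  have : Std.Irrefl (TransGen o.dir) := ⟨o.acyclic⟩
  obtain ⟨u, hu, hmin⟩ := (Finite.wellFounded_of_trans_of_irrefl (TransGen o.dir)).has_min
    {u | G.Adj v u} ⟨⟨w₀, hw₀.ne.symm⟩, hw₀⟩
  refine ⟨u, hu, fun w hw hwu hwu' => ?_⟩
  rcases reflTransGen_iff_eq_or_transGen.mp hwu' with h | h
  · exact hwu h.symm
  · exact hmin w hw h

end Extend

end AcyclicOrientation

theorem rootedCount_eq_rootedCount {V : Type*} [Finite V] (G : SimpleGraph V) (s s' : V) :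
    rootedCount G s = rootedCount G s' :=
  Nat.card_congr (AcyclicOrientation.rerootEquiv s s')

theorem rootedCount_congr {V W : Type*} {G : SimpleGraph V} {H : SimpleGraph W} (e : G ≃g H)
    (s : V) : rootedCount H (e s) = rootedCount G s := by
  refine (Nat.card_congr (Equiv.subtypeEquiv ⟨fun o => o.map e, fun o => o.map e.symm,
    fun o => o.map_symm_map e, fun o => o.map_symm_map e.symm⟩ ?_)).symm
  exact fun o => (o.isRooted_map e s).symm

open AcyclicOrientation in
theorem two_mul_rootedCount_induce_le {V : Type*} [Finite V] {G : SimpleGraph V} {v t : V}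
    (ht : t ≠ v) (hv : (G.neighborSet v).Nontrivial) :
    2 * rootedCount (G.induce {v}ᶜ) ⟨t, ht⟩ ≤ rootedCount G t := by
  obtain ⟨w₀, hw₀⟩ := hv.nonempty
  choose u hu hmin using fun o : AcyclicOrientation (G.induce {v}ᶜ) =>
    exists_adj_forall_not_reflTransGen o hw₀
  have hI (o : AcyclicOrientation (G.induce {v}ᶜ)) :
      ∀ w u' : ({v}ᶜ : Set V), G.Adj v w → (w : V) ∉ ({(u o : V)} : Set V) →
        (u' : V) ∈ ({(u o : V)} : Set V) → ¬ ReflTransGen o.dir w u' := by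
    intro w u' hw hwu hu'
    obtain rfl : u' = u o := Subtype.ext hu'
    exact hmin o w hw fun h => hwu (h ▸ rfl)
  let asSource (o : {o : AcyclicOrientation (G.induce {v}ᶜ) // o.IsRooted ⟨t, ht⟩}) :
      {O : AcyclicOrientation G // O.IsRooted t} :=
    ⟨o.1.extend ∅ (by simp), isRooted_extend ht o.2 ⟨w₀, hw₀, id⟩⟩
  let viaMinimal (o : {o : AcyclicOrientation (G.induce {v}ᶜ) // o.IsRooted ⟨t, ht⟩}) :
      {O : AcyclicOrientation G // O.IsRooted t} :=
    ⟨o.1.extend {(u o.1 : V)} (hI o.1), isRooted_extend ht o.2 (hv.exists_ne (u o.1 : V))⟩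
  have hinj : Function.Injective (Sum.elim asSource viaMinimal) := by
    refine .sumElim (fun o o' h => Subtype.ext (eq_of_extendDir_eq (o := o.1) (o' := o'.1)
        (congrArg (fun O => O.1.dir) h)))
      (fun o o' h => Subtype.ext (eq_of_extendDir_eq (o := o.1) (o' := o'.1)
        (congrArg (fun O => O.1.dir) h))) fun o o' h => ?_
    have hdir : extendDir o.1 ∅ (u o'.1) v ↔ extendDir o'.1 {(u o'.1 : V)} (u o'.1) v :=
      iff_of_eq (congrArg (fun O => O.1.dir (u o'.1) v) h)
    simp only [extendDir_to_self, Set.mem_empty_iff_false, Set.mem_singleton_iff, and_false,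
      and_true, false_iff] at hdir
    exact hdir (hu o'.1).symm
  calc 2 * rootedCount (G.induce {v}ᶜ) ⟨t, ht⟩
      = Nat.card ({o : AcyclicOrientation (G.induce {v}ᶜ) // o.IsRooted ⟨t, ht⟩} ⊕
          {o : AcyclicOrientation (G.induce {v}ᶜ) // o.IsRooted ⟨t, ht⟩}) := by
        rw [Nat.card_sum, two_mul, rootedCount]
    _ ≤ rootedCount G t := Nat.card_le_card_of_injective _ hinj

theorem Equiv.Perm.exists_apply_mem_of_apply_notMem {α : Type*} [Finite α] (e : Equiv.Perm α)
    {s : Set α} {x : α} (hx : x ∈ s) (hex : e x ∉ s) : ∃ y ∉ s, e y ∈ s := by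
  by_contra! h
  have hbij := (sᶜ.toFinite.injOn_iff_bijOn_of_mapsTo h).mp e.injective.injOn
  obtain ⟨y, hy, hyx⟩ := hbij.surjOn hex
  exact hy (e.injective hyx ▸ hx)

section PermGraph

variable {n : ℕ}

theorem insertFix_succAbove (c : Fin (n + 1)) (σ : Equiv.Perm (Fin n)) (x : Fin n) :
    insertFix c σ (c.succAbove x) = c.succAbove (σ x) := by
  simp [insertFix, finSuccEquiv'_succAbove]

theorem insertFix_symm_succAbove (c : Fin (n + 1)) (σ : Equiv.Perm (Fin n)) (x : Fin n) :
    (insertFix c σ).symm (c.succAbove x) = c.succAbove (σ.symm x) := by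
  rw [Equiv.symm_apply_eq, insertFix_succAbove, Equiv.apply_symm_apply]

theorem insertFix_self (c : Fin (n + 1)) (σ : Equiv.Perm (Fin n)) : insertFix c σ c = c := by
  simp [insertFix]

def permGraphIsoInduce (c : Fin (n + 1)) (σ : Equiv.Perm (Fin n)) :
    permGraph n σ ≃g (permGraph (n + 1) (insertFix c σ)).induce {c}ᶜ where
  toEquiv := finSuccAboveEquiv c
  map_rel_iff' {a b} := by
    change (permGraph _ _).Adj (c.succAbove a) (c.succAbove b) ↔ _
    simp only [permGraph, insertFix_symm_succAbove, Fin.succAbove_lt_succAbove_iff]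

theorem permGraph_exists_adj_of_lt_of_lt {ρ : Equiv.Perm (Fin n)} {a b c : Fin n} (hc : ρ c = c)
    (hac : a < c) (hcb : c < b) (hab : (permGraph n ρ).Adj a b) :
    ∃ w, (permGraph n ρ).Adj c w := by
  have hc' : ρ.symm c = c := ρ.symm_apply_eq.mpr hc.symm
  simp only [permGraph, hc'] at hab ⊢
  rcases lt_trichotomy (ρ.symm b) c with h | h | h
  · exact ⟨b, .inr ⟨hcb, h⟩⟩
  · exact absurd (ρ.symm.injective (h.trans hc'.symm)) hcb.ne'
  · exact ⟨a, .inl ⟨hac, by omega⟩⟩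

theorem permGraph_neighborSet_nontrivial {ρ : Equiv.Perm (Fin n)} {c w : Fin n} (hc : ρ c = c)
    (hw : (permGraph n ρ).Adj c w) :
    ((permGraph n ρ).neighborSet c).Nontrivial := by
  have hc' : ρ.symm c = c := ρ.symm_apply_eq.mpr hc.symm
  refine ⟨w, hw, ?_⟩
  simp only [SimpleGraph.mem_neighborSet, permGraph, hc'] at hw ⊢
  rcases hw with ⟨hwc, hcw⟩ | ⟨hcw, hwc⟩
  · obtain ⟨y, hy, hyc⟩ := Equiv.Perm.exists_apply_mem_of_apply_notMem ρ.symm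
      (s := {x | x < c}) hwc (not_lt.mpr hcw.le)
    simp only [Set.mem_ofPred_eq, not_lt] at hy hyc
    have hcy : c < y := lt_of_le_of_ne hy (by rintro rfl; simp [hc'] at hyc)
    exact ⟨y, .inr ⟨hcy, hyc⟩, (hwc.trans hcy).ne⟩
  · obtain ⟨y, hy, hcy⟩ := Equiv.Perm.exists_apply_mem_of_apply_notMem ρ.symm
      (s := {x | c < x}) hcw (not_lt.mpr hwc.le)
    simp only [Set.mem_ofPred_eq, not_lt] at hy hcy
    have hyc : y < c := lt_of_le_of_ne hy (by rintro rfl; simp [hc'] at hcy)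
    exact ⟨y, .inl ⟨hyc, hcy⟩, (hyc.trans hcw).ne'⟩

theorem exists_adj_insertFix_of_isRooted {σ : Equiv.Perm (Fin n)} {c : Fin (n + 1)}
    (hc₀ : 0 < (c : ℕ)) (hc : (c : ℕ) < n) {o : AcyclicOrientation (permGraph n σ)}
    {t : Fin n} (ho : o.IsRooted t) : ∃ w, (permGraph (n + 1) (insertFix c σ)).Adj c w := by
  obtain ⟨d, -, hlt, hge⟩ :=
    (ho.preconnected ⟨0, by omega⟩ (c.castLT hc)).some.exists_boundary_dart
      {x | x.castSucc < c} (Fin.lt_def.mpr hc₀) (by simp [Fin.castSucc_castLT])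
  simp only [Set.mem_ofPred_eq, not_lt] at hlt hge
  refine permGraph_exists_adj_of_lt_of_lt (insertFix_self c σ) ?_ ?_
    ((permGraphIsoInduce c σ).map_adj_iff.mpr d.adj)
  · change c.succAbove d.fst < c
    rwa [Fin.succAbove_of_castSucc_lt _ _ hlt]
  · change c < c.succAbove d.snd
    rw [Fin.succAbove_of_le_castSucc _ _ hge]
    exact hge.trans_lt Fin.castSucc_lt_succ

theorem two_mul_rootedCount_le_insertFix (σ : Equiv.Perm (Fin n)) {c : Fin (n + 1)}
    (hc₀ : 0 < (c : ℕ)) (hc : (c : ℕ) < n) (t : Fin n) :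
    2 * rootedCount (permGraph n σ) t ≤
      rootedCount (permGraph (n + 1) (insertFix c σ)) (c.succAbove t) := by
  rcases (rootedCount (permGraph n σ) t).eq_zero_or_pos with h | h
  · simp [h]
  obtain ⟨⟨o, ho⟩⟩ := (Nat.card_pos_iff.mp h).1
  obtain ⟨w, hw⟩ := exists_adj_insertFix_of_isRooted hc₀ hc ho
  rw [← rootedCount_congr (permGraphIsoInduce c σ)]
  exact two_mul_rootedCount_induce_le _
    (permGraph_neighborSet_nontrivial (insertFix_self c σ) hw)

end PermGraph

theorem insert_two_fixed_points_quadruples_general (m : ℕ) (π'' : Equiv.Perm (Fin m))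
    (j : Fin (m + 2)) (j' : Fin (m + 1))
    (hj1 : 1 ≤ (j : ℕ)) (hj2 : (j : ℕ) ≤ m)
    (hj'1 : 1 ≤ (j' : ℕ)) (hj'2 : (j' : ℕ) + 1 ≤ m)
    (s : Fin (m + 2)) (s'' : Fin m) :
    4 * rootedCount (permGraph m π'') s'' ≤
      rootedCount (permGraph (m + 2) (insertFix j (insertFix j' π''))) s :=
  calc 4 * rootedCount (permGraph m π'') s''
      = 2 * (2 * rootedCount (permGraph m π'') s'') := by ring
    _ ≤ 2 * rootedCount (permGraph (m + 1) (insertFix j' π'')) (j'.succAbove s'') :=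
      Nat.mul_le_mul_left 2 (two_mul_rootedCount_le_insertFix π'' hj'1 hj'2 s'')
    _ ≤ rootedCount (permGraph (m + 2) (insertFix j (insertFix j' π'')))
          (j.succAbove (j'.succAbove s'')) :=
      two_mul_rootedCount_le_insertFix _ hj1 (Nat.lt_succ_of_le hj2) _
    _ = rootedCount (permGraph (m + 2) (insertFix j (insertFix j' π''))) s :=
      rootedCount_eq_rootedCount _ _ _

/-- Inserting two fixed points into a fixed-point-free permutation `π''` (at interior
positions) at least quadruples the number of associated CNATs, i.e. the number of
minimal recurrent configurations of the ASM on the permutation graph, i.e. the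
number of rooted acyclic orientations of the permutation graph (for any sinks). -/
theorem insert_two_fixed_points_quadruples (m : ℕ) (π'' : Equiv.Perm (Fin m))
    (hfix : ∀ i, π'' i ≠ i) (j : Fin (m + 2)) (j' : Fin (m + 1))
    (hj1 : 1 ≤ (j : ℕ)) (hj2 : (j : ℕ) ≤ m)
    (hj'1 : 1 ≤ (j' : ℕ)) (hj'2 : (j' : ℕ) + 1 ≤ m)
    (s : Fin (m + 2)) (s'' : Fin m) :
    4 * rootedCount (permGraph m π'') s'' ≤
      rootedCount (permGraph (m + 2) (insertFix j (insertFix j' π''))) s :=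
  insert_two_fixed_points_quadruples_general m π'' j j' hj1 hj2 hj'1 hj'2 s s''
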